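/- Let (X, μ, T) be an ergodic measure-preserving system of positive entropy h. Then for each sufficiently large r ∈ ℕ there exists a measurable set F ⊆ X of positive measure such that the first return time R_F takes only the two values r and r+1 μ_F-almost everywhere (a 'semiperiodic r-marker'). -/

import Mathlib

/-!
Positive entropy forbids a positive lower bound on the measures of non-null sets, since such
a bound caps the entropy of every block partition of `P`. So there is a set `B` with
`0 < μ B < 1 / (r (r + 1) + 1)`, and ergodicity yields a non-null `A ⊆ B` whose points need
more than `r (r + 1)` steps to return to `A`. An excursion between consecutive visits to `A`
is then long enough to be tiled by blocks of length `r + 1` followed by blocks of length `r`.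
Markers are placed at prescribed distances before each visit to `A`, depending only on the
residue mod `r` of the length of the excursion starting at that visit. The marker set is thus
read off the future orbit, hence measurable, and consecutive markers are `r` or `r + 1` apart.
-/

open MeasureTheory ProbabilityTheory

/-- The first return time `R_F(y) = min{i > 0 : T^i y ∈ F}`. -/
noncomputable def returnTime {X : Type*} (T : X → X) (F : Set X) (x : X) : ℕ :=
  sInf {i | 0 < i ∧ T^[i] x ∈ F}

/-- Block entropy `H(⋁_{j<m} T^{-j}P)` of a finite partition `P` (in bits). -/
noncomputable def partBlockEntropy {X : Type*} [MeasurableSpace X] (μ : Measure X)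
    (T : X → X) {N : ℕ} (P : Fin N → Set X) (m : ℕ) : ℝ :=
  -∑ w : Fin m → Fin N,
      ((μ (⋂ j : Fin m, T^[(j : ℕ)] ⁻¹' P (w j))).toReal *
        Real.logb 2 (μ (⋂ j : Fin m, T^[(j : ℕ)] ⁻¹' P (w j))).toReal)

open Filter Set
open scoped ENNReal

section MarkerArithmetic

variable {r ρ R m : ℕ}

-- For `ρ < r` the distances increase by `r + 1` while `m ≤ ρ` and by `r` afterwards:
-- the truncated subtraction `ρ + 1 - m` switches the extra step off.
def markerDist (r ρ m : ℕ) : ℕ := r * (m + 1) - (ρ + 1 - m)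

def markerPattern (r R : ℕ) : Set ℕ := range (markerDist r ((R - 1) % r))

lemma markerDist_zero : markerDist r ρ 0 = r - (ρ + 1) := by
  simp [markerDist]

lemma markerDist_of_lt (h : ρ < m) : markerDist r ρ m = r * (m + 1) := by
  simp [markerDist, Nat.sub_eq_zero_of_le (Nat.succ_le_of_lt h)]

lemma markerDist_succ (hρ : ρ < r) (m : ℕ) :
    markerDist r ρ (m + 1) = markerDist r ρ m + r ∨
      markerDist r ρ (m + 1) = markerDist r ρ m + (r + 1) := by
  have : r ≤ r * (m + 1) := Nat.le_mul_of_pos_right r m.succ_pos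
  simp only [markerDist, mul_add, mul_one] at this ⊢
  omega

lemma strictMono_markerDist (hr : 0 < r) (hρ : ρ < r) : StrictMono (markerDist r ρ) :=
  strictMono_nat_of_lt_succ fun m => by rcases markerDist_succ hρ m with h | h <;> omega

lemma isGreatest_markerPattern_inter_Iio (hr : 0 < r) (hR : r * (r + 1) < R) (R' : ℕ) :
    IsGreatest (markerPattern r R' ∩ Iio R) (r * ((R - 1) / r)) := by
  obtain ⟨q, hq_def⟩ : ∃ q, (R - 1) / r = q := ⟨_, rfl⟩
  rw [hq_def]
  have hρ : (R' - 1) % r < r := Nat.mod_lt _ hr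
  have hq : r + 1 ≤ q := hq_def ▸ (Nat.le_div_iff_mul_le hr).2 (by rw [mul_comm]; omega)
  have hq_eq : markerDist r ((R' - 1) % r) (q - 1) = r * q := by
    rw [markerDist_of_lt (by omega), Nat.sub_add_cancel (by omega)]
  have hlt : R - 1 < markerDist r ((R' - 1) % r) q := by
    rw [markerDist_of_lt (by omega)]
    exact hq_def ▸ Nat.lt_mul_div_succ _ hr
  refine ⟨⟨⟨q - 1, hq_eq⟩, ?_⟩, ?_⟩
  · have := hq_def ▸ Nat.mul_div_le (R - 1) r
    simp only [mem_Iio]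
    omega
  · rintro _ ⟨⟨k, rfl⟩, hkR⟩
    have hmono := strictMono_markerDist hr hρ
    rw [← hq_eq]
    refine hmono.monotone (Nat.le_sub_one_of_lt ?_)
    by_contra! hk
    have := hmono.monotone hk
    simp only [mem_Iio] at hkR
    omega

lemma markerPattern_pred (hr : 0 < r) {φ : ℕ} (hφ : φ ∈ markerPattern r R)
    (hmin : φ ≠ markerDist r ((R - 1) % r) 0) :
    ∃ g, (g = r ∨ g = r + 1) ∧ g ≤ φ ∧ φ - g ∈ markerPattern r R ∧
      ∀ i, 0 < i → i < g → φ - i ∉ markerPattern r R := by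
  obtain ⟨m, rfl⟩ := hφ
  obtain ⟨k, rfl⟩ : ∃ k, m = k + 1 :=
    Nat.exists_eq_succ_of_ne_zero (by rintro rfl; exact hmin rfl)
  have hρ : (R - 1) % r < r := Nat.mod_lt _ hr
  have hmono := strictMono_markerDist hr hρ
  have hsucc := markerDist_succ hρ k
  refine ⟨markerDist r ((R - 1) % r) (k + 1) - markerDist r ((R - 1) % r) k, by omega, by omega,
    ⟨k, by omega⟩, ?_⟩
  rintro i hi hig ⟨j, hj⟩
  have h1 : k < j := hmono.lt_iff_lt.1 (by omega)
  have h2 : j < k + 1 := hmono.lt_iff_lt.1 (by omega)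
  omega

lemma markerDist_zero_le_of_mem (hr : 0 < r) {φ : ℕ} (hφ : φ ∈ markerPattern r R) :
    markerDist r ((R - 1) % r) 0 ≤ φ := by
  obtain ⟨m, rfl⟩ := hφ
  exact (strictMono_markerDist hr (Nat.mod_lt _ hr)).monotone m.zero_le

end MarkerArithmetic

section HittingTime

variable {X : Type*} {T : X → X} {A : Set X} {x : X}

noncomputable def hitTime (T : X → X) (A : Set X) (x : X) : ℕ := sInf {n | T^[n] x ∈ A}

lemma hitTime_iterate {s : ℕ} (hs : s ≤ hitTime T A x) :
    hitTime T A (T^[s] x) = hitTime T A x - s := by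
  have := Nat.sInf_add (p := fun n => T^[n] x ∈ A) hs
  simp only [Function.iterate_add_apply] at this
  unfold hitTime
  omega

lemma Filter.Frequently.iterate_mem_iterate (hx : ∃ᶠ n in atTop, T^[n] x ∈ A) (s : ℕ) :
    ∃ᶠ n in atTop, T^[n] (T^[s] x) ∈ A := by
  rw [← map_add_atTop_eq_nat s, frequently_map] at hx
  simpa only [Function.comp_def, Function.iterate_add_apply] using hx

lemma iterate_hitTime_mem (hx : ∃ᶠ n in atTop, T^[n] x ∈ A) : T^[hitTime T A x] x ∈ A :=
  Nat.sInf_mem hx.exists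

lemma returnTime_eq_hitTime_add_one (hx : ∃ᶠ n in atTop, T^[n] x ∈ A) :
    returnTime T A x = hitTime T A (T x) + 1 := by
  obtain ⟨n, hnA, hn⟩ := (hx.and_eventually (eventually_gt_atTop 0)).exists
  have hpos : 1 ≤ returnTime T A x := by
    refine Nat.one_le_iff_ne_zero.2 fun h => ?_
    rcases Nat.sInf_eq_zero.1 h with h0 | hempty
    · exact lt_irrefl 0 h0.1
    · exact hempty.subset ⟨hn, hnA⟩
  have := Nat.sInf_add (p := fun i => 0 < i ∧ T^[i] x ∈ A) hpos
  simp only [Nat.succ_pos, true_and, Function.iterate_succ_apply] at this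
  exact this.symm

lemma hitTime_iterate_of_le_returnTime (hx : ∃ᶠ n in atTop, T^[n] x ∈ A) {s : ℕ}
    (hs0 : 0 < s) (hs : s ≤ returnTime T A x) : hitTime T A (T^[s] x) = returnTime T A x - s := by
  obtain ⟨s, rfl⟩ := Nat.exists_eq_add_of_lt hs0
  rw [returnTime_eq_hitTime_add_one hx] at hs ⊢
  rw [zero_add, Function.iterate_succ_apply, hitTime_iterate (by omega)]
  omega

lemma le_returnTime {L : ℕ} (hsep : ∀ a ∈ A, ∀ i, 0 < i → i < L → T^[i] a ∉ A)
    (hxA : x ∈ A) (hx : ∃ᶠ n in atTop, T^[n] x ∈ A) : L ≤ returnTime T A x := by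
  obtain ⟨n, hnA, hn⟩ := (hx.and_eventually (eventually_gt_atTop 0)).exists
  exact le_csInf ⟨n, hn, hnA⟩ fun i ⟨hi, hiA⟩ => not_lt.1 fun hiL => hsep x hxA i hi hiL hiA

lemma returnTime_eq {F : Set X} {g : ℕ} (hg : 0 < g) (hgF : T^[g] x ∈ F)
    (hmin : ∀ i, 0 < i → i < g → T^[i] x ∉ F) : returnTime T F x = g :=
  le_antisymm (Nat.sInf_le ⟨hg, hgF⟩)
    (le_csInf ⟨g, hg, hgF⟩ fun i ⟨hi, hiF⟩ => not_lt.1 fun hig => hmin i hi hig hiF)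

end HittingTime

section MarkerSet

variable {X : Type*} {T : X → X} {A : Set X} {x : X} {r L : ℕ}

-- A point is a marker when its distance to the next visit `a` to `A` lies in the pattern
-- selected by the length of the excursion starting at `a`.
def markerSet (T : X → X) (A : Set X) (r : ℕ) : Set X :=
  {x | (∃ᶠ n in atTop, T^[n] x ∈ A) ∧
    hitTime T A x ∈ markerPattern r (returnTime T A (T^[hitTime T A x] x))}

lemma iterate_mem_markerSet_iff (hx : ∃ᶠ n in atTop, T^[n] x ∈ A) {i H : ℕ} (hiH : i ≤ H)
    (hH : hitTime T A (T^[i] x) = H - i) :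
    T^[i] x ∈ markerSet T A r ↔ H - i ∈ markerPattern r (returnTime T A (T^[H] x)) := by
  rw [markerSet, mem_ofPred_eq, hH, ← Function.iterate_add_apply, Nat.sub_add_cancel hiH]
  exact and_iff_right (hx.iterate_mem_iterate i)

lemma iterate_mem_markerSet_iff_of_le_hitTime (hx : ∃ᶠ n in atTop, T^[n] x ∈ A) {i : ℕ}
    (hi : i ≤ hitTime T A x) :
    T^[i] x ∈ markerSet T A r ↔
      hitTime T A x - i ∈ markerPattern r (returnTime T A (T^[hitTime T A x] x)) :=
  iterate_mem_markerSet_iff hx hi (hitTime_iterate hi)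

lemma iterate_mem_markerSet_iff_of_le_returnTime (hx : ∃ᶠ n in atTop, T^[n] x ∈ A) {s : ℕ}
    (hs0 : 0 < s) (hs : s ≤ returnTime T A x) :
    T^[s] x ∈ markerSet T A r ↔
      returnTime T A x - s ∈ markerPattern r (returnTime T A (T^[returnTime T A x] x)) :=
  iterate_mem_markerSet_iff hx hs (hitTime_iterate_of_le_returnTime hx hs0 hs)

lemma exists_next_mem_markerSet_of_ne (hr : 0 < r) (hx : x ∈ markerSet T A r)
    (hmin : hitTime T A x ≠
      markerDist r ((returnTime T A (T^[hitTime T A x] x) - 1) % r) 0) :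
    ∃ g, (g = r ∨ g = r + 1) ∧ T^[g] x ∈ markerSet T A r ∧
      ∀ i, 0 < i → i < g → T^[i] x ∉ markerSet T A r := by
  obtain ⟨hfreq, hφ⟩ := hx
  obtain ⟨g, hg, hgφ, hmem, hgap⟩ := markerPattern_pred hr hφ hmin
  refine ⟨g, hg, (iterate_mem_markerSet_iff_of_le_hitTime hfreq hgφ).2 hmem,
    fun i hi hig => ?_⟩
  rw [iterate_mem_markerSet_iff_of_le_hitTime hfreq (by omega)]
  exact hgap i hi hig

variable (hr : 0 < r) (hsep : ∀ a ∈ A, ∀ i, 0 < i → i < L → T^[i] a ∉ A)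
  (hL : r * (r + 1) < L)
include hr hsep hL

-- Markers in the excursion of length `R` from `a` are governed by the pattern of its end
-- point; the farthest one from that end is `r * ((R - 1) / r)` away, i.e. `(R - 1) % r + 1`
-- steps after `a`.
lemma iterate_mod_succ_mem_markerSet_of_mem {a : X} (haA : a ∈ A)
    (ha : ∃ᶠ n in atTop, T^[n] a ∈ A) :
    T^[(returnTime T A a - 1) % r + 1] a ∈ markerSet T A r ∧
      ∀ s, 0 < s → s < (returnTime T A a - 1) % r + 1 → T^[s] a ∉ markerSet T A r := by
  have hR : r * (r + 1) < returnTime T A a := hL.trans_le (le_returnTime hsep haA ha)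
  have := Nat.div_add_mod (returnTime T A a - 1) r
  have := Nat.mod_lt (returnTime T A a - 1) hr
  have hr_le : r ≤ r * (r + 1) := Nat.le_mul_of_pos_right r r.succ_pos
  have hgreat := isGreatest_markerPattern_inter_Iio hr hR
    (returnTime T A (T^[returnTime T A a] a))
  have hiff : ∀ s, 0 < s → s ≤ (returnTime T A a - 1) % r + 1 →
      (T^[s] a ∈ markerSet T A r ↔ returnTime T A a - s ∈
        markerPattern r (returnTime T A (T^[returnTime T A a] a))) := fun s hs0 hs =>
    iterate_mem_markerSet_iff_of_le_returnTime ha hs0 (by omega)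
  refine ⟨(hiff _ (by omega) le_rfl).2 ?_, fun s hs0 hs hmem => ?_⟩
  · convert hgreat.1.1 using 1
    omega
  · have := hgreat.2 ⟨(hiff s hs0 hs.le).1 hmem, by rw [mem_Iio]; omega⟩
    omega

lemma exists_iterate_mem_markerSet (hx : ∃ᶠ n in atTop, T^[n] x ∈ A) :
    ∃ t, T^[t] x ∈ markerSet T A r :=
  ⟨_ + hitTime T A x, by
    rw [Function.iterate_add_apply]
    exact (iterate_mod_succ_mem_markerSet_of_mem hr hsep hL (iterate_hitTime_mem hx)
      (hx.iterate_mem_iterate _)).1⟩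

-- The marker `r - ((R - 1) % r + 1)` steps before a visit `a` to `A` and the first marker
-- `(R - 1) % r + 1` steps after `a` are exactly `r` apart.
lemma exists_next_mem_markerSet_of_eq (hx : ∃ᶠ n in atTop, T^[n] x ∈ A)
    (hmin : hitTime T A x =
      markerDist r ((returnTime T A (T^[hitTime T A x] x) - 1) % r) 0) :
    ∃ g, (g = r ∨ g = r + 1) ∧ T^[g] x ∈ markerSet T A r ∧
      ∀ i, 0 < i → i < g → T^[i] x ∉ markerSet T A r := by
  obtain ⟨φ, hφ⟩ : ∃ φ, hitTime T A x = φ := ⟨_, rfl⟩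
  obtain ⟨a, ha_def⟩ : ∃ a, T^[φ] x = a := ⟨_, rfl⟩
  have ha : ∃ᶠ n in atTop, T^[n] a ∈ A := ha_def ▸ hx.iterate_mem_iterate φ
  have haA : a ∈ A := ha_def ▸ hφ ▸ iterate_hitTime_mem hx
  rw [hφ, ha_def, markerDist_zero] at hmin
  have := Nat.mod_lt (returnTime T A a - 1) hr
  obtain ⟨hnext, hgap⟩ := iterate_mod_succ_mem_markerSet_of_mem hr hsep hL haA ha
  have hshift : ∀ i, φ ≤ i → T^[i] x = T^[i - φ] a := fun i hi => by
    rw [← ha_def, ← Function.iterate_add_apply, Nat.sub_add_cancel hi]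
  refine ⟨r, .inl rfl, ?_, fun i hi hir => ?_⟩
  · rw [hshift r (by omega)]
    convert hnext using 2
    omega
  rcases le_or_gt i φ with hiφ | hiφ
  · rw [iterate_mem_markerSet_iff_of_le_hitTime hx (hφ ▸ hiφ), hφ, ha_def]
    intro hmem
    have := markerDist_zero_le_of_mem hr hmem
    rw [markerDist_zero] at this
    omega
  · rw [hshift i hiφ.le]
    exact hgap _ (by omega) (by omega)

theorem returnTime_markerSet (hx : x ∈ markerSet T A r) :
    returnTime T (markerSet T A r) x = r ∨ returnTime T (markerSet T A r) x = r + 1 := by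
  obtain ⟨g, hg, hgF, hmin⟩ := (em _).elim (exists_next_mem_markerSet_of_eq hr hsep hL hx.1)
    (exists_next_mem_markerSet_of_ne hr hx)
  rw [returnTime_eq (by omega) hgF hmin]
  exact hg

end MarkerSet

section Measurability

variable {X : Type*} [MeasurableSpace X] {T : X → X} {A : Set X}

lemma measurable_sInf_setOf {p : ℕ → X → Prop} (hp : ∀ n, MeasurableSet {x | p n x}) :
    Measurable fun x => sInf {n | p n x} := by
  classical
  have hq : ∀ x, ∃ n, p n x ∨ ∀ k, ¬p k x := fun x =>
    (em (∃ k, p k x)).elim (fun ⟨k, hk⟩ => ⟨k, .inl hk⟩)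
      fun h => ⟨0, .inr (not_exists.1 h)⟩
  have heq : (fun x => sInf {n | p n x}) = fun x => Nat.find (hq x) := by
    funext x
    by_cases h : ∃ k, p k x
    · refine le_antisymm (Nat.sInf_le ((Nat.find_spec (hq x)).resolve_right ?_))
        (Nat.find_min' _ (.inl (Nat.sInf_mem h)))
      exact fun h' => let ⟨k, hk⟩ := h; h' k hk
    · rw [show {n | p n x} = ∅ from eq_empty_of_forall_notMem (not_exists.1 h), Nat.sInf_empty]
      exact (Nat.eq_zero_of_le_zero (Nat.find_min' _ (.inr (not_exists.1 h)))).symm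
  rw [heq]
  refine measurable_find hq fun n => ?_
  simpa only [ofPred_or, ofPred_forall, ← compl_ofPred] using
    (hp n).union (.iInter fun k => (hp k).compl)

lemma measurable_hitTime (hT : Measurable T) (hA : MeasurableSet A) :
    Measurable (hitTime T A) :=
  measurable_sInf_setOf fun n => hA.preimage (hT.iterate n)

lemma measurable_returnTime (hT : Measurable T) (hA : MeasurableSet A) :
    Measurable (returnTime T A) :=
  measurable_sInf_setOf fun n => (MeasurableSet.const (0 < n)).inter (hA.preimage (hT.iterate n))

lemma measurableSet_frequently_iterate_mem (hT : Measurable T) (hA : MeasurableSet A) :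
    MeasurableSet {x | ∃ᶠ n in atTop, T^[n] x ∈ A} := by
  have : {x | ∃ᶠ n in atTop, T^[n] x ∈ A} = limsup (fun n => T^[n] ⁻¹' A) atTop := by
    ext x
    exact (mem_limsup_iff_frequently_mem (s := fun n => T^[n] ⁻¹' A)).symm
  rw [this]
  exact .measurableSet_limsup fun n => hA.preimage (hT.iterate n)

lemma measurableSet_markerSet (hT : Measurable T) (hA : MeasurableSet A) (r : ℕ) :
    MeasurableSet (markerSet T A r) := by
  have hnext : Measurable fun x => T^[hitTime T A x] x :=
    (measurable_from_prod_countable_left (f := fun p : X × ℕ => T^[p.2] p.1) fun n =>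
      hT.iterate n).comp (measurable_id.prodMk (measurable_hitTime hT hA))
  exact (measurableSet_frequently_iterate_mem hT hA).inter
    ((measurable_hitTime hT hA).prodMk ((measurable_returnTime hT hA).comp hnext)
      (MeasurableSet.of_discrete (s := {p : ℕ × ℕ | p.1 ∈ markerPattern r p.2})))

end Measurability

section Ergodic

variable {X : Type*} [MeasurableSpace X] {μ : Measure X} {T : X → X} {A B : Set X}

lemma Ergodic.ae_frequently_iterate_mem [IsFiniteMeasure μ] (hT : Ergodic T μ)
    (hA : MeasurableSet A) (hA0 : μ A ≠ 0) :
    ∀ᵐ x ∂μ, ∃ᶠ n in atTop, T^[n] x ∈ A := by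
  have hV := measurableSet_frequently_iterate_mem hT.measurable hA
  have hinv : T ⁻¹' {x | ∃ᶠ n in atTop, T^[n] x ∈ A} =
      {x | ∃ᶠ n in atTop, T^[n] x ∈ A} := by
    ext x
    simp only [mem_preimage, mem_ofPred_eq, ← Function.iterate_succ_apply]
    conv_rhs => rw [← map_add_atTop_eq_nat 1, frequently_map]
  rcases hT.measure_self_or_compl_eq_zero hV hinv with h | h
  · refine absurd (measure_mono_null (inter_subset_right (s := A)) h) ?_
    rwa [hT.conservative.measure_inter_frequently_image_mem_eq hA.nullMeasurableSet]
  · exact h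

omit [MeasurableSpace X] in
lemma biUnion_preimage_iterate_diff_preimage_subset (L : ℕ) :
    (⋃ i ∈ Finset.range L, T^[i] ⁻¹' B) \
        T ⁻¹' (⋃ i ∈ Finset.range L, T^[i] ⁻¹' B) ⊆
      B \ ⋃ i ∈ Ioo 0 L, T^[i] ⁻¹' B := by
  rintro x ⟨hxU, hxn⟩
  have hnot : ∀ j, 0 < j → j ≤ L → T^[j] x ∉ B := fun j hj hjL hjB =>
    hxn (mem_biUnion (Finset.mem_range.2 (by omega : j - 1 < L))
      (by rwa [mem_preimage, ← Function.iterate_succ_apply, Nat.succ_eq_add_one,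
        Nat.sub_add_cancel hj]))
  obtain ⟨i, hi, hiB⟩ := mem_iUnion₂.1 hxU
  obtain rfl : i = 0 := by
    by_contra hi0
    exact hnot i (by omega) (Finset.mem_range.1 hi).le hiB
  refine ⟨hiB, fun hx => ?_⟩
  obtain ⟨j, ⟨hj, hjL⟩, hjB⟩ := mem_iUnion₂.1 hx
  exact hnot j hj hjL.le hjB

-- If `A` were null, the union of the first `L` preimages of `B` would be invariant mod `μ`,
-- hence of full measure, although its measure is at most `L * μ B < 1`.
lemma Ergodic.exists_measure_pos_forall_iterate_notMem [IsProbabilityMeasure μ]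
    (hT : Ergodic T μ) (hB : MeasurableSet B) (hB0 : μ B ≠ 0) {L : ℕ} (hL : 0 < L)
    (hBL : μ B < (L : ℝ≥0∞)⁻¹) :
    ∃ A, MeasurableSet A ∧ 0 < μ A ∧
      ∀ a ∈ A, ∀ i, 0 < i → i < L → T^[i] a ∉ A := by
  have hTm := hT.measurable
  have hU : MeasurableSet (⋃ i ∈ Finset.range L, T^[i] ⁻¹' B) :=
    .biUnion (Finset.range L).countable_toSet fun i _ => hB.preimage (hTm.iterate i)
  refine ⟨B \ ⋃ i ∈ Ioo 0 L, T^[i] ⁻¹' B,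
    hB.diff (.biUnion (to_countable _) fun i _ => hB.preimage (hTm.iterate i)),
    pos_iff_ne_zero.2 fun hA0 => ?_,
    fun a ha i hi hiL haA => ha.2 (mem_biUnion ⟨hi, hiL⟩ haA.1)⟩
  rcases hT.ae_empty_or_univ_of_ae_le_preimage hU.nullMeasurableSet
    (ae_le_set.2 (measure_mono_null (biUnion_preimage_iterate_diff_preimage_subset L) hA0))
    with h | h
  · refine hB0 (measure_mono_null ?_ ((measure_congr h).trans measure_empty))
    exact subset_biUnion_of_mem (u := fun i => T^[i] ⁻¹' B) (Finset.mem_range.2 hL)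
  · have hle : μ (⋃ i ∈ Finset.range L, T^[i] ⁻¹' B) ≤ L * μ B := by
      refine (measure_biUnion_finset_le _ _).trans_eq ?_
      rw [Finset.sum_congr rfl fun i _ => (hT.iterate i).measure_preimage hB.nullMeasurableSet,
        Finset.sum_const, Finset.card_range, nsmul_eq_mul]
    rw [measure_congr h, measure_univ] at hle
    exact hle.not_gt (ENNReal.mul_lt_of_lt_div' (by rwa [one_div]))

lemma MeasureTheory.MeasurePreserving.measure_pos_of_ae_exists_iterate_mem [NeZero μ]
    (hT : MeasurePreserving T μ μ) {F : Set X} (hF : NullMeasurableSet F μ)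
    (h : ∀ᵐ x ∂μ, ∃ t, T^[t] x ∈ F) : 0 < μ F := by
  refine pos_iff_ne_zero.2 fun hF0 => NeZero.ne μ ?_
  have hnot : ∀ᵐ x ∂μ, ∀ t, T^[t] x ∉ F := ae_all_iff.2 fun t =>
    measure_eq_zero_iff_ae_notMem.1 (((hT.iterate t).measure_preimage hF).trans hF0)
  rw [← ae_eq_bot, ← eventually_false_iff_eq_bot]
  filter_upwards [h, hnot] with x ⟨t, ht⟩ hx using hx t ht

end Ergodic

section Entropy

lemma neg_mul_logb_le_mul_logb {p n : ℝ} (hn : 0 < n) (hp : n⁻¹ ≤ p) :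
    -(p * Real.logb 2 p) ≤ p * Real.logb 2 n := by
  have hp0 : 0 < p := (inv_pos.2 hn).trans_le hp
  rw [← mul_neg, ← Real.logb_inv]
  exact mul_le_mul_of_nonneg_left
    (Real.logb_le_logb_of_le one_lt_two (inv_pos.2 hp0) (inv_le_of_inv_le₀ hn hp)) hp0.le

lemma pairwise_disjoint_iInter_preimage_iterate {X α : Type*} {T : X → X} {P : α → Set X}
    (hP : Pairwise (Function.onFun Disjoint P)) (m : ℕ) :
    Pairwise (Function.onFun Disjoint
      fun w : Fin m → α => ⋂ j : Fin m, T^[j] ⁻¹' P (w j)) := by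
  intro w w' hne
  obtain ⟨j, hj⟩ := Function.ne_iff.1 hne
  exact ((hP hj).preimage _).mono (iInter_subset _ j) (iInter_subset _ j)

variable {X : Type*} [MeasurableSpace X] {μ : Measure X} [IsProbabilityMeasure μ]

lemma neg_sum_mul_logb_nonneg {ι : Type*} [Fintype ι] (s : ι → Set X) :
    0 ≤ -∑ i, (μ (s i)).toReal * Real.logb 2 (μ (s i)).toReal := by
  refine neg_nonneg.2 (Finset.sum_nonpos fun i _ => mul_nonpos_of_nonneg_of_nonpos
    ENNReal.toReal_nonneg (Real.logb_nonpos one_lt_two ENNReal.toReal_nonneg ?_))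
  exact ENNReal.toReal_le_of_le_ofReal zero_le_one (by simpa using prob_le_one)

lemma neg_sum_mul_logb_le_logb {ι : Type*} [Fintype ι] {s : ι → Set X}
    (hs : ∀ i, MeasurableSet (s i)) (hd : Pairwise (Function.onFun Disjoint s)) {n : ℕ}
    (hn : ∀ t, MeasurableSet t → μ t ≠ 0 → (n : ℝ≥0∞)⁻¹ ≤ μ t) :
    -∑ i, (μ (s i)).toReal * Real.logb 2 (μ (s i)).toReal ≤ Real.logb 2 n := by
  have hn0 : 0 < n := Nat.pos_of_ne_zero fun h => by
    simpa [h] using hn univ .univ (by simp)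
  have hterm : ∀ i, -((μ (s i)).toReal * Real.logb 2 (μ (s i)).toReal) ≤
      (μ (s i)).toReal * Real.logb 2 n := by
    intro i
    by_cases h0 : μ (s i) = 0
    · simp [h0]
    · refine neg_mul_logb_le_mul_logb (by exact_mod_cast hn0) ?_
      simpa using ENNReal.toReal_mono (measure_ne_top μ _) (hn _ (hs i) h0)
  have hsum : ∑ i, (μ (s i)).toReal ≤ 1 := by
    simpa only [measureReal_def] using
      (measureReal_iUnion_fintype hd hs).symm.trans_le (measureReal_le_one (μ := μ))
  calc -∑ i, (μ (s i)).toReal * Real.logb 2 (μ (s i)).toReal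
      = ∑ i, -((μ (s i)).toReal * Real.logb 2 (μ (s i)).toReal) := by
        rw [Finset.sum_neg_distrib]
    _ ≤ ∑ i, (μ (s i)).toReal * Real.logb 2 n := Finset.sum_le_sum fun i _ => hterm i
    _ = (∑ i, (μ (s i)).toReal) * Real.logb 2 n := Finset.sum_mul ..|>.symm
    _ ≤ 1 * Real.logb 2 n := mul_le_mul_of_nonneg_right hsum
          (Real.logb_nonneg one_lt_two (by exact_mod_cast hn0))
    _ = Real.logb 2 n := one_mul _

variable {T : X → X} {N : ℕ} {P : Fin N → Set X}

lemma exists_measure_ne_zero_lt_of_liminf_pos (hT : Measurable T)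
    (hPm : ∀ i, MeasurableSet (P i)) (hPd : Pairwise (Function.onFun Disjoint P))
    (hlim : 0 < atTop.liminf fun m => partBlockEntropy μ T P m / m) {ε : ℝ≥0∞}
    (hε : ε ≠ 0) :
    ∃ B, MeasurableSet B ∧ μ B ≠ 0 ∧ μ B < ε := by
  by_contra! h
  obtain ⟨n, hn⟩ := ENNReal.exists_inv_nat_lt hε
  have hbound : ∀ m, partBlockEntropy μ T P m ≤ Real.logb 2 n := fun m =>
    neg_sum_mul_logb_le_logb (fun w => .iInter fun j => (hPm _).preimage (hT.iterate _))
      (pairwise_disjoint_iInter_preimage_iterate hPd m) fun t ht h0 => hn.le.trans (h t ht h0)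
  have htends : Tendsto (fun m : ℕ => partBlockEntropy μ T P m / m) atTop (nhds 0) :=
    tendsto_of_tendsto_of_tendsto_of_le_of_le tendsto_const_nhds
      (tendsto_const_div_atTop_nhds_zero_nat (Real.logb 2 n))
      (fun m => div_nonneg (neg_sum_mul_logb_nonneg _) m.cast_nonneg)
      (fun m => div_le_div_of_nonneg_right (hbound m) m.cast_nonneg)
  exact hlim.ne' htends.liminf_eq

end Entropy

/-- In any ergodic system of positive (Kolmogorov–Sinai) entropy — i.e. admitting a
finite measurable partition whose entropy rate is positive — for every sufficiently
large `r` there is a "semiperiodic `r`-marker": a positive measure set `F` whose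
first return time takes only the values `r` and `r+1` (`μ_F`-a.e.). -/
theorem stmt11 {X : Type*} [MeasurableSpace X] (μ : Measure X) [IsProbabilityMeasure μ]
    (T : X → X) (hT : Ergodic T μ)
    (hpos : ∃ (N : ℕ) (P : Fin N → Set X), (∀ i, MeasurableSet (P i)) ∧
      Pairwise (Function.onFun Disjoint P) ∧ (⋃ i, P i) = Set.univ ∧
      0 < Filter.atTop.liminf (fun m => partBlockEntropy μ T P m / m)) :
    ∃ r₀ : ℕ, ∀ r : ℕ, r₀ ≤ r → ∃ F : Set X, MeasurableSet F ∧ 0 < μ F ∧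
      ∀ᵐ y ∂(ProbabilityTheory.cond μ F),
        returnTime T F y = r ∨ returnTime T F y = r + 1 := by
  obtain ⟨N, P, hPm, hPd, -, hlim⟩ := hpos
  refine ⟨1, fun r hr => ?_⟩
  have hL : r * (r + 1) < r * (r + 1) + 1 := Nat.lt_succ_self _
  obtain ⟨B, hB, hB0, hBL⟩ := exists_measure_ne_zero_lt_of_liminf_pos hT.measurable hPm hPd hlim
    (ENNReal.inv_ne_zero.2 (ENNReal.natCast_ne_top (r * (r + 1) + 1)))
  obtain ⟨A, hA, hA0, hsep⟩ :=
    hT.exists_measure_pos_forall_iterate_notMem hB hB0 (Nat.succ_pos _) hBL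
  have hF := measurableSet_markerSet hT.measurable hA r
  refine ⟨markerSet T A r, hF, ?_, ?_⟩
  · refine hT.toMeasurePreserving.measure_pos_of_ae_exists_iterate_mem hF.nullMeasurableSet ?_
    filter_upwards [hT.ae_frequently_iterate_mem hA hA0.ne'] with x hx
    exact exists_iterate_mem_markerSet hr hsep hL hx
  · filter_upwards [ae_cond_mem hF] with y hy
    exact returnTime_markerSet hr hsep hL hy
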